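/- Let R : Ω → ℝ be integrable with E[R] < 0 and let b : Ω → [0,∞) be tempered. Let d_n, η_n : Ω → [0,∞) (n ∈ ℕ) be measurable functions such that d_0 is finite almost surely, η_n(ω) ≤ b(θ^n ω) for all n ≥ 1 and ω, and d_n(ω) ≤ η_n(ω) + exp(R(θ^{n−1} ω))·d_{n−1}(ω) for all n ≥ 1 and ω. If η_n → 0 in probability as n → ∞, then d_n → 0 in probability as n → ∞. -/

import Mathlib

/-!
Pull everything back along `θ⁻ⁿ`: since `θ⁻¹` preserves `μ`, `d n ∘ θ⁻ⁿ` has the law of `d n`.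
Unrolling the recursion gives
`d n (θ⁻ⁿ ω) ≤ ∑_{l<n} η (n-l) (θ⁻ⁿ ω) · e^{S_l ω} + e^{S_n ω} · d 0 (θ⁻ⁿ ω)`,
where `S_l` are the Birkhoff sums of `R ∘ θ⁻¹` along `θ⁻¹`. As `θ⁻¹` is ergodic and `E[R] < 0`,
the maximal ergodic theorem gives `S_l ω ≤ C(ω) - c l`, so by temperedness the series
`∑_l b (θ⁻ˡ ω) e^{S_l ω}` converges a.s. For a cut-off `m`, the terms `l ≤ m` tend to `0` in
probability (`η → 0` times a fixed factor), the terms `m < l < n` are bounded by the tail of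
that series, and the last term is an a.s. null sequence times a tight one.
-/

open Filter MeasureTheory Topology Finset
open scoped ENNReal

/-- A measurable function `b : Ω → [0,∞)` is *tempered* with respect to an invertible
measure-preserving transformation `θ` (with inverse `θinv`) if for a.e. `ω` one has
`(1/|n|) · log⁺ b(θⁿ ω) → 0` as `|n| → ∞` (`n ∈ ℤ`), where `log⁺ t = max (log t) 0`. -/
def IsTempered {Ω : Type*} [MeasurableSpace Ω] (μ : MeasureTheory.Measure Ω)
    (θ θinv : Ω → Ω) (b : Ω → ℝ) : Prop :=
  ∀ᵐ ω ∂μ,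
    Tendsto (fun n : ℕ => max (Real.log (b (θ^[n] ω))) 0 / (n : ℝ)) atTop (nhds 0) ∧
    Tendsto (fun n : ℕ => max (Real.log (b (θinv^[n] ω))) 0 / (n : ℝ)) atTop (nhds 0)

namespace MeasureTheory

variable {α ι E : Type*} [MeasurableSpace α] {μ : Measure α} {l : Filter ι}
  [SeminormedAddCommGroup E]

theorem tendstoInMeasure_zero_iff {f : ι → α → E} :
    TendstoInMeasure μ f l 0 ↔ ∀ ε > (0 : ℝ), ∀ δ > (0 : ℝ≥0∞),
      ∀ᶠ i in l, μ {x | ε ≤ ‖f i x‖} ≤ δ := by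
  simp only [tendstoInMeasure_iff_norm, Pi.zero_apply, sub_zero, ENNReal.tendsto_nhds_zero]

theorem TendstoInMeasure.add {f g : ι → α → E} (hf : TendstoInMeasure μ f l 0)
    (hg : TendstoInMeasure μ g l 0) : TendstoInMeasure μ (fun i x => f i x + g i x) l 0 := by
  rw [tendstoInMeasure_zero_iff] at *
  intro ε hε δ hδ
  filter_upwards [hf (ε / 2) (half_pos hε) (δ / 2) (ENNReal.half_pos hδ.ne'),
    hg (ε / 2) (half_pos hε) (δ / 2) (ENNReal.half_pos hδ.ne')] with i hfi hgi
  calc μ {x | ε ≤ ‖f i x + g i x‖}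
      ≤ μ ({x | ε / 2 ≤ ‖f i x‖} ∪ {x | ε / 2 ≤ ‖g i x‖}) := by
        refine measure_mono fun x (hx : ε ≤ ‖f i x + g i x‖) => ?_
        by_contra! h
        simp only [Set.mem_union, Set.mem_ofPred_eq, not_or, not_le] at h
        linarith [norm_add_le (f i x) (g i x)]
    _ ≤ δ / 2 + δ / 2 := (measure_union_le _ _).trans (add_le_add hfi hgi)
    _ = δ := ENNReal.add_halves δ

theorem tendstoInMeasure_finset_sum {κ : Type*} (s : Finset κ) {f : κ → ι → α → E}
    (hf : ∀ k ∈ s, TendstoInMeasure μ (f k) l 0) :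
    TendstoInMeasure μ (fun i x => ∑ k ∈ s, f k i x) l 0 := by
  classical
  induction s using Finset.induction_on with
  | empty =>
    exact tendstoInMeasure_zero_iff.2 fun ε hε δ _ =>
      Eventually.of_forall fun _ => by simp [not_le.2 hε]
  | insert k s hk ih =>
    simp only [Finset.sum_insert hk]
    exact TendstoInMeasure.add (hf k (mem_insert_self k s))
      (ih fun j hj => hf j (mem_insert_of_mem hj))

def BoundedInMeasure (μ : Measure α) (g : ι → α → E) (l : Filter ι) : Prop :=
  ∀ δ > (0 : ℝ≥0∞), ∃ K : ℝ, ∀ᶠ i in l, μ {x | K ≤ ‖g i x‖} ≤ δ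

theorem MeasurePreserving.measure_le_norm_comp {φ : α → α} (hφ : MeasurePreserving φ μ μ)
    {g : α → E} (hg : AEStronglyMeasurable g μ) (K : ℝ) :
    μ {x | K ≤ ‖g (φ x)‖} = μ {x | K ≤ ‖g x‖} :=
  hφ.measure_preimage (nullMeasurableSet_le aemeasurable_const hg.norm.aemeasurable)

theorem tendsto_measure_le_norm_atTop [IsFiniteMeasure μ] {g : α → E}
    (hg : AEStronglyMeasurable g μ) :
    Tendsto (fun K : ℝ => μ {x | K ≤ ‖g x‖}) atTop (𝓝 0) := by
  have hempty : (⋂ K : ℝ, {x | K ≤ ‖g x‖}) = ∅ := by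
    ext x
    simpa using ⟨‖g x‖ + 1, by linarith⟩
  have h := tendsto_measure_iInter_atTop
    (fun K => nullMeasurableSet_le aemeasurable_const hg.norm.aemeasurable)
    (fun _ _ hKK' _ hx => hKK'.trans (Set.mem_ofPred.1 hx)) ⟨0, measure_ne_top μ _⟩
  rwa [hempty, measure_empty] at h

theorem boundedInMeasure_comp_measurePreserving [IsFiniteMeasure μ] {g : α → E}
    (hg : AEStronglyMeasurable g μ) {φ : ι → α → α} (hφ : ∀ i, MeasurePreserving (φ i) μ μ) :
    BoundedInMeasure μ (fun i => g ∘ φ i) l := by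
  intro δ hδ
  obtain ⟨K, hK⟩ := ((tendsto_measure_le_norm_atTop hg).eventually_le_const hδ).exists
  exact ⟨K, Eventually.of_forall fun i => by
    simpa [(hφ i).measure_le_norm_comp hg K] using hK⟩

theorem TendstoInMeasure.comp_measurePreserving {f : ι → α → E} (hf : TendstoInMeasure μ f l 0)
    (hfm : ∀ i, AEStronglyMeasurable (f i) μ) {φ : ι → α → α}
    (hφ : ∀ i, MeasurePreserving (φ i) μ μ) :
    TendstoInMeasure μ (fun i => f i ∘ φ i) l 0 := by
  rw [tendstoInMeasure_zero_iff] at *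
  intro ε hε δ hδ
  filter_upwards [hf ε hε δ hδ] with i hi
  simpa [(hφ i).measure_le_norm_comp (hfm i) ε] using hi

theorem TendstoInMeasure.mul_boundedInMeasure {f g : ι → α → ℝ} (hf : TendstoInMeasure μ f l 0)
    (hg : BoundedInMeasure μ g l) : TendstoInMeasure μ (fun i x => f i x * g i x) l 0 := by
  rw [tendstoInMeasure_zero_iff] at *
  intro ε hε δ hδ
  obtain ⟨K, hK⟩ := hg (δ / 2) (ENNReal.half_pos hδ.ne')
  set K' := max K 1
  have hK' : 0 < K' := lt_max_of_lt_right one_pos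
  filter_upwards [hK, hf (ε / K') (div_pos hε hK') (δ / 2) (ENNReal.half_pos hδ.ne')]
    with i hgi hfi
  calc μ {x | ε ≤ ‖f i x * g i x‖}
      ≤ μ ({x | ε / K' ≤ ‖f i x‖} ∪ {x | K ≤ ‖g i x‖}) := by
        refine measure_mono fun x (hx : ε ≤ ‖f i x * g i x‖) => ?_
        by_contra! h
        simp only [Set.mem_union, Set.mem_ofPred_eq, not_or, not_le] at h
        rw [norm_mul] at hx
        have hg' : ‖g i x‖ ≤ K' := h.2.le.trans (le_max_left _ _)
        have h1 := mul_le_mul_of_nonneg_left hg' (norm_nonneg (f i x))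
        have h2 := mul_lt_mul_of_pos_right h.1 hK'
        rw [div_mul_cancel₀ _ hK'.ne'] at h2
        linarith
    _ ≤ δ / 2 + δ / 2 := (measure_union_le _ _).trans (add_le_add hfi hgi)
    _ = δ := ENNReal.add_halves δ

theorem tendstoInMeasure_of_norm_le_add {f : ι → α → E} {a : ℕ → α → ℝ} {g : ℕ → ι → α → ℝ}
    (hfag : ∀ m, ∀ᶠ i in l, ∀ᵐ x ∂μ, ‖f i x‖ ≤ a m x + g m i x)
    (ha : TendstoInMeasure μ a atTop 0) (hg : ∀ m, TendstoInMeasure μ (g m) l 0) :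
    TendstoInMeasure μ f l 0 := by
  rw [tendstoInMeasure_zero_iff] at *
  intro ε hε δ hδ
  obtain ⟨m, hm⟩ := (ha (ε / 2) (half_pos hε) (δ / 2) (ENNReal.half_pos hδ.ne')).exists
  filter_upwards [hfag m, (tendstoInMeasure_zero_iff.1 (hg m)) (ε / 2) (half_pos hε) (δ / 2)
    (ENNReal.half_pos hδ.ne')] with i hfi hgi
  calc μ {x | ε ≤ ‖f i x‖}
      ≤ μ ({x | ε / 2 ≤ ‖a m x‖} ∪ {x | ε / 2 ≤ ‖g m i x‖}) := by
        refine measure_mono_ae (hfi.mono fun x hx (hεx : ε ≤ ‖f i x‖) => ?_)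
        change x ∈ {x | _} ∪ {x | _}
        by_contra! h
        simp only [Set.mem_union, Set.mem_ofPred_eq, not_or, not_le] at h
        linarith [Real.le_norm_self (a m x), Real.le_norm_self (g m i x)]
    _ ≤ δ / 2 + δ / 2 := (measure_union_le _ _).trans (add_le_add hm hgi)
    _ = δ := ENNReal.add_halves δ

theorem tendstoInMeasure_tsum_nat_add [IsFiniteMeasure μ] {F : ℕ → α → ℝ}
    (hF : ∀ l, AEMeasurable (F l) μ) :
    TendstoInMeasure μ (fun m x => ∑' k, F (k + m) x) atTop 0 :=
  tendstoInMeasure_of_tendsto_ae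
    (fun m => (AEMeasurable.tsum fun k => hF (k + m)).aestronglyMeasurable)
    (Eventually.of_forall fun x => tendsto_sum_nat_add fun k => F k x)

theorem tendstoInMeasure_sum_comp_iterate_mul [IsFiniteMeasure μ] {η : ℕ → α → ℝ}
    (hη : TendstoInMeasure μ η atTop 0) (hηm : ∀ n, AEStronglyMeasurable (η n) μ) {φ : α → α}
    (hφ : MeasurePreserving φ μ μ) {Y : ℕ → α → ℝ} (hY : ∀ l, AEStronglyMeasurable (Y l) μ)
    (s : Finset ℕ) :
    TendstoInMeasure μ (fun n x => ∑ l ∈ s, η (n - l) (φ^[n] x) * Y l x) atTop 0 :=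
  tendstoInMeasure_finset_sum s fun l _ =>
    TendstoInMeasure.mul_boundedInMeasure (g := fun _ => Y l)
      ((hη.comp (tendsto_sub_atTop_nat l)).comp_measurePreserving (fun _ => hηm _)
        fun n => hφ.iterate n)
      (boundedInMeasure_comp_measurePreserving (hY l) fun _ => MeasurePreserving.id μ)

theorem tendstoInMeasure_mul_comp_iterate [IsFiniteMeasure μ] {Y : ℕ → α → ℝ}
    (hYm : ∀ n, AEStronglyMeasurable (Y n) μ) (hY : ∀ᵐ x ∂μ, Tendsto (Y · x) atTop (𝓝 0))
    {g : α → ℝ} (hg : AEStronglyMeasurable g μ) {φ : α → α} (hφ : MeasurePreserving φ μ μ) :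
    TendstoInMeasure μ (fun n x => Y n x * g (φ^[n] x)) atTop 0 :=
  TendstoInMeasure.mul_boundedInMeasure (g := fun n => g ∘ φ^[n])
    (tendstoInMeasure_of_tendsto_ae hYm hY)
    (boundedInMeasure_comp_measurePreserving hg fun n => hφ.iterate n)

theorem MeasurePreserving.integral_comp_of_aestronglyMeasurable
    {β G : Type*} [MeasurableSpace β] [NormedAddCommGroup G]
    [NormedSpace ℝ G] {ν : Measure β} {f : α → β}
    (hf : MeasurePreserving f μ ν) {g : β → G} (hg : AEStronglyMeasurable g ν) :
    ∫ x, g (f x) ∂μ = ∫ y, g y ∂ν := by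
  rw [← hf.map_eq] at hg
  rw [← integral_map hf.measurable.aemeasurable hg, hf.map_eq]

theorem AEStronglyMeasurable.birkhoffSum {M : Type*} [AddCommMonoid M]
    [TopologicalSpace M] [ContinuousAdd M] {f : α → α} {g : α → M} (hg : AEStronglyMeasurable g μ)
    (hf : Measure.QuasiMeasurePreserving f μ μ) (n : ℕ) :
    AEStronglyMeasurable (birkhoffSum f g n) μ :=
  Finset.aestronglyMeasurable_fun_sum _ fun k _ => hg.comp_quasiMeasurePreserving (hf.iterate k)

end MeasureTheory

section BirkhoffMax

variable {α : Type*} {f : α → α} {g : α → ℝ}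

/-- `birkhoffMax f g N = max (0, S₁, …, S_N)` for the Birkhoff sums `Sₙ` of `g`, written through
the recursion `M_{N+1} = max 0 (g + M_N ∘ f)` on which Garsia's proof of the maximal ergodic
theorem rests. -/
def birkhoffMax (f : α → α) (g : α → ℝ) : ℕ → α → ℝ
  | 0 => 0
  | N + 1 => fun x => max 0 (g x + birkhoffMax f g N (f x))

theorem birkhoffMax_nonneg (N : ℕ) (x : α) : 0 ≤ birkhoffMax f g N x := by
  cases N
  · exact le_rfl
  · exact le_max_left _ _

theorem birkhoffMax_le_succ (N : ℕ) (x : α) : birkhoffMax f g N x ≤ birkhoffMax f g (N + 1) x := by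
  induction N generalizing x with
  | zero => exact birkhoffMax_nonneg 1 x
  | succ N ih => exact max_le_max le_rfl (add_le_add_right (ih (f x)) _)

theorem birkhoffSum_le_birkhoffMax (N : ℕ) (x : α) : birkhoffSum f g N x ≤ birkhoffMax f g N x := by
  induction N generalizing x with
  | zero => simp [birkhoffSum_zero, birkhoffMax]
  | succ N ih =>
    rw [birkhoffSum_succ']
    exact (add_le_add_right (ih (f x)) _).trans (le_max_right _ _)

theorem bddAbove_range_birkhoffSum_apply_iff (x : α) :
    BddAbove (Set.range fun n => birkhoffSum f g n (f x)) ↔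
      BddAbove (Set.range fun n => birkhoffSum f g n x) := by
  simp only [bddAbove_def, Set.forall_mem_range]
  constructor
  · rintro ⟨C, hC⟩
    refine ⟨max 0 (g x + C), fun n => ?_⟩
    cases n with
    | zero => simp [birkhoffSum_zero]
    | succ n =>
      rw [birkhoffSum_succ']
      exact (add_le_add_right (hC n) _).trans (le_max_right _ _)
  · rintro ⟨C, hC⟩
    exact ⟨C - g x, fun n => by linarith [hC (n + 1), birkhoffSum_succ' f g n x]⟩

variable [MeasurableSpace α] {μ : Measure α}

theorem measurable_birkhoffMax (hf : Measurable f) (hg : Measurable g) (N : ℕ) :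
    Measurable (birkhoffMax f g N) := by
  induction N with
  | zero => exact measurable_const
  | succ N ih => exact measurable_const.max (hg.add (ih.comp hf))

theorem integrable_birkhoffMax (hf : MeasurePreserving f μ μ) (hg : Integrable g μ) (N : ℕ) :
    Integrable (birkhoffMax f g N) μ := by
  induction N with
  | zero => exact integrable_zero _ _ _
  | succ N ih => exact (integrable_zero _ _ _).sup (hg.add (hf.integrable_comp_of_integrable ih))

/-- Garsia's form of the maximal ergodic theorem. -/
theorem setIntegral_birkhoffMax_pos_nonneg (hf : MeasurePreserving f μ μ) (hgm : Measurable g)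
    (hg : Integrable g μ) (N : ℕ) : 0 ≤ ∫ x in {x | 0 < birkhoffMax f g (N + 1) x}, g x ∂μ := by
  set M := birkhoffMax f g
  set A := {x | 0 < M (N + 1) x}
  have hA : MeasurableSet A :=
    measurableSet_lt measurable_const (measurable_birkhoffMax hf.measurable hgm _)
  have hMint : ∀ N, Integrable (M N) μ := integrable_birkhoffMax hf hg
  have hMf : Integrable (fun x => M N (f x)) μ := hf.integrable_comp_of_integrable (hMint N)
  have hdiff : Integrable (fun x => M (N + 1) x - M N (f x)) μ := (hMint _).sub hMf
  have hon : ∀ x ∈ A, g x = M (N + 1) x - M N (f x) := fun x hx => by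
    have hx' : 0 < max 0 (g x + M N (f x)) := hx
    change g x = max 0 (g x + M N (f x)) - M N (f x)
    rw [max_eq_right ((lt_max_iff.1 hx').resolve_left (lt_irrefl 0)).le]
    ring
  have hoff : ∫ x in Aᶜ, (M (N + 1) x - M N (f x)) ∂μ ≤ 0 :=
    setIntegral_nonpos hA.compl fun x hx => by
      rw [le_antisymm (not_lt.1 (Set.notMem_ofPred_iff.1 hx)) (birkhoffMax_nonneg _ x)]
      linarith [birkhoffMax_nonneg (f := f) (g := g) N (f x)]
  have htotal : 0 ≤ ∫ x, (M (N + 1) x - M N (f x)) ∂μ := by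
    rw [integral_sub (hMint _) hMf,
      hf.integral_comp_of_aestronglyMeasurable (hMint N).1]
    exact sub_nonneg.2 (integral_mono (hMint N) (hMint _) (birkhoffMax_le_succ N))
  rw [setIntegral_congr_fun hA hon]
  linarith [integral_add_compl hA hdiff]

theorem Ergodic.ae_bddAbove_birkhoffSum_of_measurable (hf : Ergodic f μ) (hgm : Measurable g)
    (hg : Integrable g μ) (hneg : ∫ x, g x ∂μ < 0) :
    ∀ᵐ x ∂μ, BddAbove (Set.range fun n => birkhoffSum f g n x) := by
  set B := {x | BddAbove (Set.range fun n => birkhoffSum f g n x)}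
  have hB : MeasurableSet B := measurableSet_bddAbove_range fun n =>
    Finset.measurable_sum _ fun k _ => hgm.comp (hf.measurable.iterate k)
  have hfB : f ⁻¹' B = B := Set.ext bddAbove_range_birkhoffSum_apply_iff
  refine (hf.measure_self_or_compl_eq_zero hB hfB).resolve_left fun hB0 => hneg.not_ge ?_
  set U := ⋃ N, {x | 0 < birkhoffMax f g (N + 1) x}
  have hU : ∀ N, MeasurableSet {x | 0 < birkhoffMax f g (N + 1) x} := fun N =>
    measurableSet_lt measurable_const (measurable_birkhoffMax hf.measurable hgm _)
  have hBU : Bᶜ ⊆ U := fun x hx => by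
    obtain ⟨n, hn⟩ : ∃ n, 0 < birkhoffSum f g n x := by
      by_contra! h
      exact hx ⟨0, Set.forall_mem_range.2 h⟩
    cases n with
    | zero => simp [birkhoffSum_zero] at hn
    | succ n => exact Set.mem_iUnion.2 ⟨n, hn.trans_le (birkhoffSum_le_birkhoffMax _ x)⟩
  have hUc : μ Uᶜ = 0 := measure_mono_null (Set.compl_subset_comm.1 hBU) hB0
  have hmono : Monotone fun N => {x | 0 < birkhoffMax f g (N + 1) x} :=
    monotone_nat_of_le_succ fun N x hx => hx.trans_le (birkhoffMax_le_succ _ x)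
  calc (0 : ℝ) ≤ ∫ x in U, g x ∂μ :=
        ge_of_tendsto (tendsto_setIntegral_of_monotone hU hmono hg.integrableOn)
          (Eventually.of_forall (setIntegral_birkhoffMax_pos_nonneg hf.toMeasurePreserving hgm hg))
    _ = ∫ x, g x ∂μ := by rw [setIntegral_congr_set (ae_eq_univ.2 hUc), setIntegral_univ]

theorem Ergodic.ae_bddAbove_birkhoffSum (hf : Ergodic f μ) (hg : Integrable g μ)
    (hneg : ∫ x, g x ∂μ < 0) : ∀ᵐ x ∂μ, BddAbove (Set.range fun n => birkhoffSum f g n x) := by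
  obtain ⟨g', hg'm, hgg'⟩ := hg.aemeasurable
  have hsum : ∀ᵐ x ∂μ, ∀ n, birkhoffSum f g n x = birkhoffSum f g' n x := ae_all_iff.2 fun n =>
    hf.toMeasurePreserving.quasiMeasurePreserving.birkhoffSum_ae_eq_of_ae_eq hgg' n
  filter_upwards [hf.ae_bddAbove_birkhoffSum_of_measurable hg'm (hg.congr hgg')
    (by rwa [← integral_congr_ae hgg']), hsum] with x hx hx'
  simpa only [hx'] using hx

theorem Ergodic.ae_exists_birkhoffSum_le_sub_mul [IsProbabilityMeasure μ] (hf : Ergodic f μ)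
    (hg : Integrable g μ) {c : ℝ} (hc : ∫ x, g x ∂μ < -c) :
    ∀ᵐ x ∂μ, ∃ C, ∀ n : ℕ, birkhoffSum f g n x ≤ C - c * n := by
  have hgc : Integrable (fun x => g x + c) μ := hg.add (integrable_const c)
  filter_upwards [hf.ae_bddAbove_birkhoffSum hgc
    (by rw [integral_add hg (integrable_const c)]; simp; linarith)] with x ⟨C, hC⟩
  refine ⟨C, fun n => ?_⟩
  have hshift : birkhoffSum f (fun x => g x + c) n x = birkhoffSum f g n x + n * c := by
    simp [birkhoffSum, Finset.sum_add_distrib]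
  linarith [hC ⟨n, rfl⟩]

end BirkhoffMax

theorem summable_mul_exp_of_tendsto_log_div {u s : ℕ → ℝ} (hu : ∀ n, 0 ≤ u n)
    (hlog : Tendsto (fun n : ℕ => max (Real.log (u n)) 0 / n) atTop (𝓝 0)) {C c : ℝ}
    (hc : 0 < c) (hs : ∀ n : ℕ, s n ≤ C - c * n) :
    Summable fun n => u n * Real.exp (s n) := by
  have hr : Real.exp (-(c / 2)) < 1 := Real.exp_lt_one_iff.2 (by linarith)
  refine Summable.of_norm_bounded_eventually
    ((summable_geometric_of_lt_one (Real.exp_pos _).le hr).mul_left (Real.exp C)) ?_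
  rw [Nat.cofinite_eq_atTop]
  filter_upwards [hlog.eventually_le_const (half_pos hc), eventually_gt_atTop 0] with n hn hn0
  have hu_le : u n ≤ Real.exp (c / 2 * n) :=
    (Real.le_exp_log _).trans <| Real.exp_le_exp.2 <|
      (le_max_left _ _).trans ((div_le_iff₀ (Nat.cast_pos.2 hn0)).1 hn)
  rw [Real.norm_of_nonneg (mul_nonneg (hu n) (Real.exp_pos _).le)]
  calc u n * Real.exp (s n) ≤ Real.exp (c / 2 * n) * Real.exp (C - c * n) :=
        mul_le_mul hu_le (Real.exp_le_exp.2 (hs n)) (Real.exp_pos _).le (Real.exp_pos _).le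
    _ = Real.exp C * Real.exp (-(c / 2)) ^ n := by
        rw [← Real.exp_nat_mul, ← Real.exp_add, ← Real.exp_add]
        ring_nf

theorem tendsto_exp_of_le_sub_mul {s : ℕ → ℝ} {C c : ℝ} (hc : 0 < c)
    (hs : ∀ n : ℕ, s n ≤ C - c * n) : Tendsto (fun n => Real.exp (s n)) atTop (𝓝 0) := by
  have hlin : Tendsto (fun n : ℕ => C - c * n) atTop atBot :=
    tendsto_atBot_add_const_left _ C
      (tendsto_neg_atTop_atBot.comp (tendsto_natCast_atTop_atTop.const_mul_atTop hc))
  exact Real.tendsto_exp_atBot.comp (tendsto_atBot_mono hs hlin)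

theorem sum_range_le_sum_range_add_tsum {a F : ℕ → ℝ} (hF : Summable F) (hF0 : ∀ l, 0 ≤ F l)
    {m n : ℕ} (hmn : m ≤ n) (haF : ∀ l, m ≤ l → l < n → a l ≤ F l) :
    ∑ l ∈ range n, a l ≤ ∑ l ∈ range m, a l + ∑' k, F (k + m) := by
  rw [← sum_range_add_sum_Ico a hmn]
  gcongr
  calc ∑ l ∈ Ico m n, a l ≤ ∑ l ∈ Ico m n, F l :=
        sum_le_sum fun l hl => haF l (mem_Ico.1 hl).1 (mem_Ico.1 hl).2
    _ = ∑ k ∈ range (n - m), F (k + m) := by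
        rw [sum_Ico_eq_sum_range]; simp only [add_comm]
    _ ≤ ∑' k, F (k + m) := ((summable_nat_add_iff m).2 hF).sum_le_tsum _ fun k _ => hF0 _

section Unrolling

variable {Ω : Type*} {θ θinv : Ω → Ω} {R : Ω → ℝ} {d η : ℕ → Ω → ℝ}

theorem comp_iterate_le_sum_exp_birkhoffSum (hinv : Function.RightInverse θinv θ)
    (hrec : ∀ n ω, d (n + 1) ω ≤ η (n + 1) ω + Real.exp (R (θ^[n] ω)) * d n ω) (n : ℕ) (ω : Ω) :
    d n (θinv^[n] ω) ≤ ∑ l ∈ range n,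
        η (n - l) (θinv^[n] ω) * Real.exp (birkhoffSum θinv (R ∘ θinv) l ω) +
      Real.exp (birkhoffSum θinv (R ∘ θinv) n ω) * d 0 (θinv^[n] ω) := by
  induction n generalizing ω with
  | zero => simp
  | succ n ih =>
    set S := birkhoffSum θinv (R ∘ θinv)
    have hS : ∀ l, S (l + 1) ω = R (θinv ω) + S l (θinv ω) := fun l => birkhoffSum_succ' _ _ l ω
    have hy : θinv^[n + 1] ω = θinv^[n] (θinv ω) := Function.iterate_succ_apply _ _ _
    calc d (n + 1) (θinv^[n + 1] ω)
        ≤ η (n + 1) (θinv^[n + 1] ω) + Real.exp (R (θinv ω)) * d n (θinv^[n] (θinv ω)) := by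
          simpa only [hy, hinv.iterate n (θinv ω)] using hrec n (θinv^[n + 1] ω)
      _ ≤ η (n + 1) (θinv^[n + 1] ω) + Real.exp (R (θinv ω)) *
            (∑ l ∈ range n, η (n - l) (θinv^[n + 1] ω) * Real.exp (S l (θinv ω)) +
              Real.exp (S n (θinv ω)) * d 0 (θinv^[n + 1] ω)) := by
          rw [hy]; gcongr; exact ih (θinv ω)
      _ = ∑ l ∈ range (n + 1), η (n + 1 - l) (θinv^[n + 1] ω) * Real.exp (S l ω) +
            Real.exp (S (n + 1) ω) * d 0 (θinv^[n + 1] ω) := by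
          simp only [sum_range_succ', hS, Real.exp_add, mul_add, mul_sum,
            Nat.add_sub_add_right, Nat.sub_zero, birkhoffSum_zero, S, Real.exp_zero,
            mul_left_comm (Real.exp (R (θinv ω)))]
          ring

theorem comp_iterate_le_tsum_add_sum (hinv : Function.RightInverse θinv θ)
    (hrec : ∀ n ω, d (n + 1) ω ≤ η (n + 1) ω + Real.exp (R (θ^[n] ω)) * d n ω)
    {b : Ω → ℝ} (hη_le : ∀ n, 1 ≤ n → ∀ ω, η n ω ≤ b (θ^[n] ω)) (hb : ∀ ω, 0 ≤ b ω) {ω : Ω}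
    (hsum : Summable fun l => b (θinv^[l] ω) * Real.exp (birkhoffSum θinv (R ∘ θinv) l ω))
    {m n : ℕ} (hmn : m ≤ n) :
    d n (θinv^[n] ω) ≤
      ∑' k, b (θinv^[k + m] ω) * Real.exp (birkhoffSum θinv (R ∘ θinv) (k + m) ω) +
        (∑ l ∈ range m, η (n - l) (θinv^[n] ω) * Real.exp (birkhoffSum θinv (R ∘ θinv) l ω) +
          Real.exp (birkhoffSum θinv (R ∘ θinv) n ω) * d 0 (θinv^[n] ω)) := by
  have hsplit := sum_range_le_sum_range_add_tsum hsum
    (a := fun l => η (n - l) (θinv^[n] ω) * Real.exp (birkhoffSum θinv (R ∘ θinv) l ω))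
    (fun l => mul_nonneg (hb _) (Real.exp_pos _).le) hmn fun l _ hln => by
      refine mul_le_mul_of_nonneg_right ?_ (Real.exp_pos _).le
      calc η (n - l) (θinv^[n] ω) ≤ b (θ^[n - l] (θinv^[n] ω)) := hη_le _ (by omega) _
        _ = b (θinv^[l] ω) := by
          rw [← Nat.sub_add_cancel hln.le, Function.iterate_add_apply, Nat.add_sub_cancel,
            hinv.iterate]
  linarith [comp_iterate_le_sum_exp_birkhoffSum hinv hrec n ω]

end Unrolling

theorem statement6_general
    {Ω : Type*} [MeasurableSpace Ω] {μ : Measure Ω} [IsProbabilityMeasure μ]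
    {θ θinv : Ω → Ω}
    (hinv₁ : Function.LeftInverse θinv θ) (hinv₂ : Function.RightInverse θinv θ)
    (hθ : Ergodic θ μ) (hθinv : MeasurePreserving θinv μ μ)
    {R : Ω → ℝ} (hR : Integrable R μ) (hRneg : ∫ ω, R ω ∂μ < 0)
    {b : Ω → ℝ} (hb_meas : Measurable b) (hb_nonneg : ∀ ω, 0 ≤ b ω)
    (hb_temp : IsTempered μ θ θinv b)
    {d η : ℕ → Ω → ℝ}
    (hd_meas : ∀ n, Measurable (d n)) (hd_nonneg : ∀ n ω, 0 ≤ d n ω)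
    (hη_meas : ∀ n, Measurable (η n))
    (hη_le : ∀ n, 1 ≤ n → ∀ ω, η n ω ≤ b (θ^[n] ω))
    (hrec : ∀ n, 1 ≤ n → ∀ ω,
      d n ω ≤ η n ω + Real.exp (R (θ^[n - 1] ω)) * d (n - 1) ω)
    (hη_tendsto : TendstoInMeasure μ η atTop 0) :
    TendstoInMeasure μ d atTop 0 := by
  have hθinv_erg : Ergodic θinv μ :=
    Ergodic.symm (e := ⟨⟨θ, θinv, hinv₁, hinv₂⟩, hθ.measurable, hθinv.measurable⟩) hθ
  set S : ℕ → Ω → ℝ := birkhoffSum θinv (R ∘ θinv)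
  have hS_meas : ∀ l, AEStronglyMeasurable (fun ω => Real.exp (S l ω)) μ := fun l =>
    Real.continuous_exp.comp_aestronglyMeasurable
      ((hR.1.comp_quasiMeasurePreserving hθinv.quasiMeasurePreserving).birkhoffSum
        hθinv.quasiMeasurePreserving l)
  obtain ⟨c, hc, hRc⟩ : ∃ c : ℝ, 0 < c ∧ ∫ ω, R ω ∂μ < -c :=
    ⟨-(∫ ω, R ω ∂μ) / 2, by linarith, by linarith⟩
  have hS_le : ∀ᵐ ω ∂μ, ∃ C, ∀ l : ℕ, S l ω ≤ C - c * l :=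
    hθinv_erg.ae_exists_birkhoffSum_le_sub_mul (hθinv.integrable_comp_of_integrable hR) <| by
      simpa only [Function.comp_apply, hθinv.integral_comp_of_aestronglyMeasurable hR.1]
        using hRc
  set F : ℕ → Ω → ℝ := fun l ω => b (θinv^[l] ω) * Real.exp (S l ω)
  have hF : ∀ᵐ ω ∂μ, Summable fun l => F l ω := by
    filter_upwards [hS_le, hb_temp] with ω ⟨C, hC⟩ hω
    exact summable_mul_exp_of_tendsto_log_div (fun _ => hb_nonneg _) hω.2 hc hC
  suffices TendstoInMeasure μ (fun n => d n ∘ θinv^[n]) atTop 0 by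
    simpa [Function.comp_def, hinv₁.iterate _ _] using this.comp_measurePreserving
      (fun n => ((hd_meas n).comp (hθinv.measurable.iterate n)).aestronglyMeasurable)
      (fun n => hθ.toMeasurePreserving.iterate n)
  refine tendstoInMeasure_of_norm_le_add (a := fun m ω => ∑' k, F (k + m) ω)
    (g := fun m n ω => ∑ l ∈ range m, η (n - l) (θinv^[n] ω) * Real.exp (S l ω) +
      Real.exp (S n ω) * d 0 (θinv^[n] ω)) (fun m => ?_)
    (tendstoInMeasure_tsum_nat_add fun l =>
      (hb_meas.comp (hθinv.measurable.iterate l)).aemeasurable.mul (hS_meas l).aemeasurable)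
    (fun m => (tendstoInMeasure_sum_comp_iterate_mul hη_tendsto
      (fun n => (hη_meas n).aestronglyMeasurable) hθinv hS_meas _).add
      (tendstoInMeasure_mul_comp_iterate hS_meas
        (hS_le.mono fun ω ⟨C, hC⟩ => tendsto_exp_of_le_sub_mul hc hC)
        (hd_meas 0).aestronglyMeasurable hθinv))
  filter_upwards [eventually_ge_atTop m] with n hmn
  filter_upwards [hF] with ω hFω
  rw [Function.comp_apply, Real.norm_of_nonneg (hd_nonneg _ _)]
  exact comp_iterate_le_tsum_add_sum hinv₂ (fun n => by simpa using hrec (n + 1) (by omega))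
    hη_le hb_nonneg hFω hmn

/-- Let `θ` be an invertible ergodic measure-preserving transformation
of a probability space, `R` integrable with `E[R] < 0`, and `b ≥ 0` tempered.  Let
`d n, η n : Ω → [0,∞)` be measurable, with `d 0` finite almost surely,
`η n ω ≤ b (θ^n ω)` for `n ≥ 1`, and
`d n ω ≤ η n ω + exp(R (θ^{n-1} ω)) · d (n-1) ω` for all `n ≥ 1`.
If `η n → 0` in probability, then `d n → 0` in probability. -/
theorem statement6
    {Ω : Type*} [MeasurableSpace Ω] {μ : Measure Ω} [IsProbabilityMeasure μ]
    {θ θinv : Ω → Ω}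
    (hinv₁ : Function.LeftInverse θinv θ) (hinv₂ : Function.RightInverse θinv θ)
    (hθ : Ergodic θ μ) (hθinv : MeasurePreserving θinv μ μ)
    {R : Ω → ℝ} (hR : Integrable R μ) (hRneg : ∫ ω, R ω ∂μ < 0)
    {b : Ω → ℝ} (hb_meas : Measurable b) (hb_nonneg : ∀ ω, 0 ≤ b ω)
    (hb_temp : IsTempered μ θ θinv b)
    {d η : ℕ → Ω → ℝ}
    (hd_meas : ∀ n, Measurable (d n)) (hd_nonneg : ∀ n ω, 0 ≤ d n ω)
    (hη_meas : ∀ n, Measurable (η n)) (hη_nonneg : ∀ n ω, 0 ≤ η n ω)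
    (hη_le : ∀ n, 1 ≤ n → ∀ ω, η n ω ≤ b (θ^[n] ω))
    (hrec : ∀ n, 1 ≤ n → ∀ ω,
      d n ω ≤ η n ω + Real.exp (R (θ^[n - 1] ω)) * d (n - 1) ω)
    (hη_tendsto : TendstoInMeasure μ η atTop 0) :
    TendstoInMeasure μ d atTop 0 :=
  statement6_general hinv₁ hinv₂ hθ hθinv hR hRneg hb_meas hb_nonneg hb_temp hd_meas hd_nonneg
    hη_meas hη_le hrec hη_tendsto
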